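/- arXiv:1010.4975 — 3 statements merged into one kernel-verified Lean document; each statement's English description precedes it below -/
import Mathlib

section
/- Let A, B, α, β be real numbers with A > B > 0 and 0 < β < α. Let G = G(A,B), F = G(2B, A+B), G₁ = α·G + β·F, and let Q be the 3×3 circulant permutation matrix with Q₀₁ = Q₁₂ = Q₂₀ = 1. Let w ∈ ℝ³ with Qw ≠ w, and set c = (wᵀG(Qw))/(wᵀGw) and c₁ = (wᵀG₁(Qw))/(wᵀG₁w). Then c₁ = (β + (α+β)c)/(α + 2βc); equivalently, the angles φ = arccos c and φ₁ = arccos c₁ between w and Qw with respect to G and G₁ satisfy cos φ₁ = (β + (α+β)cos φ)/(α + 2β cos φ). -/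
open Matrix

/-- The 3×3 circulant matrix with diagonal entries `A` and off-diagonal entries `B`. -/
def Gmat (A B : ℝ) : Matrix (Fin 3) (Fin 3) ℝ :=
  Matrix.of fun i j => if i = j then A else B

/-- The 3×3 circulant permutation matrix with `Q₀₁ = Q₁₂ = Q₂₀ = 1`. -/
def Qmat : Matrix (Fin 3) (Fin 3) ℝ :=
  !![0, 1, 0; 0, 0, 1; 1, 0, 0]

set_option maxHeartbeats 1000000 in
theorem stmt_8 (A B α β : ℝ) (hAB : A > B) (hB : B > 0) (hβ : 0 < β) (hβα : β < α)
    (w : Fin 3 → ℝ) (hw : Qmat.mulVec w ≠ w)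
    (G G₁ : Matrix (Fin 3) (Fin 3) ℝ)
    (hG : G = Gmat A B)
    (hG₁ : G₁ = α • Gmat A B + β • Gmat (2 * B) (A + B))
    (c c₁ : ℝ)
    (hc : c = (w ⬝ᵥ G.mulVec (Qmat.mulVec w)) / (w ⬝ᵥ G.mulVec w))
    (hc₁ : c₁ = (w ⬝ᵥ G₁.mulVec (Qmat.mulVec w)) / (w ⬝ᵥ G₁.mulVec w)) :
    c₁ = (β + (α + β) * c) / (α + 2 * β * c) ∧
    Real.cos (Real.arccos c₁)
      = (β + (α + β) * Real.cos (Real.arccos c)) / (α + 2 * β * Real.cos (Real.arccos c)) := by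
  set w0 := w 0 with hw0
  set w1 := w 1 with hw1
  set w2 := w 2 with hw2
  set s : ℝ := A*(w0^2+w1^2+w2^2) + 2*B*(w0*w1+w1*w2+w2*w0) with hs_def
  set t : ℝ := (A-B)*(w0*w1+w1*w2+w2*w0) + B*(w0+w1+w2)^2 with ht_def
  -- the four dot products
  have es : w ⬝ᵥ G.mulVec w = s := by
    subst hG
    simp [hs_def, Gmat, Qmat, Matrix.mulVec, dotProduct, Fin.sum_univ_three,
      Matrix.of_apply, Matrix.vecHead, Matrix.vecTail, ← hw0, ← hw1, ← hw2]
    ring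
  have et : w ⬝ᵥ G.mulVec (Qmat.mulVec w) = t := by
    subst hG
    simp [ht_def, Gmat, Qmat, Matrix.mulVec, dotProduct, Fin.sum_univ_three,
      Matrix.of_apply, Matrix.vecHead, Matrix.vecTail, ← hw0, ← hw1, ← hw2]
    ring
  have e1s : w ⬝ᵥ G₁.mulVec w = α * s + 2 * β * t := by
    subst hG₁
    simp [hs_def, ht_def, Gmat, Qmat, Matrix.mulVec, dotProduct, Fin.sum_univ_three,
      Matrix.of_apply, Matrix.vecHead, Matrix.vecTail, Matrix.add_apply,
      Matrix.smul_apply, ← hw0, ← hw1, ← hw2]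
    ring
  have e1t : w ⬝ᵥ G₁.mulVec (Qmat.mulVec w) = β * s + (α + β) * t := by
    subst hG₁
    simp [hs_def, ht_def, Gmat, Qmat, Matrix.mulVec, dotProduct, Fin.sum_univ_three,
      Matrix.of_apply, Matrix.vecHead, Matrix.vecTail, Matrix.add_apply,
      Matrix.smul_apply, ← hw0, ← hw1, ← hw2]
    ring
  -- not all coordinates are equal
  have hne : ¬ (w1 = w0 ∧ w2 = w1 ∧ w0 = w2) := by
    intro h
    apply hw
    funext i
    fin_cases i <;>
      simp [Qmat, Matrix.mulVec, dotProduct, Fin.sum_univ_three, Matrix.vecHead,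
        Matrix.vecTail, ← hw0, ← hw1, ← hw2] <;> tauto
  clear_value w0 w1 w2 s t
  have hd : (w0 - w1)^2 + (w1 - w2)^2 + (w2 - w0)^2 > 0 := by
    rcases not_and_or.mp hne with h | h
    · nlinarith [sq_nonneg (w1 - w2), sq_nonneg (w2 - w0), sq_pos_of_ne_zero (sub_ne_zero.mpr fun hh => h hh.symm)]
    rcases not_and_or.mp (h) with h' | h'
    · nlinarith [sq_nonneg (w0 - w1), sq_nonneg (w2 - w0), sq_pos_of_ne_zero (sub_ne_zero.mpr fun hh => h' hh.symm)]
    · nlinarith [sq_nonneg (w0 - w1), sq_nonneg (w1 - w2), sq_pos_of_ne_zero (sub_ne_zero.mpr fun hh => h' hh.symm)]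
  have hp : w0^2 + w1^2 + w2^2 > 0 := by nlinarith [sq_nonneg (w0+w1+w2)]
  have st1 : s - t > 0 := by
    have : s - t = (A - B) / 2 * ((w0 - w1)^2 + (w1 - w2)^2 + (w2 - w0)^2) := by
      rw [hs_def, ht_def]; ring
    rw [this]
    exact mul_pos (by linarith) hd
  have st3 : s + 2 * t = (A + 2*B) * (w0+w1+w2)^2 := by rw [hs_def, ht_def]; ring
  have st3' : s + 2 * t ≥ 0 := by
    rw [st3]
    exact mul_nonneg (by linarith) (sq_nonneg _)
  have hsum : (w0+w1)^2 + (w1+w2)^2 + (w2+w0)^2 > 0 := by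
    nlinarith [sq_nonneg (w0+w1+w2)]
  have st2 : s + t > 0 := by
    have hid : 2*(s+t) = (A-B)*((w0+w1)^2 + (w1+w2)^2 + (w2+w0)^2) + 4*B*(w0+w1+w2)^2 := by
      rw [hs_def, ht_def]; ring
    nlinarith [mul_pos (show (0:ℝ) < A - B by linarith) hsum,
      mul_nonneg hB.le (sq_nonneg (w0+w1+w2))]
  have hs : s > 0 := by linarith
  have hs1 : α * s + 2 * β * t > 0 := by
    nlinarith [mul_pos (show (0:ℝ) < α - β by linarith) hs, mul_nonneg hβ.le st3']
  have hd1 : (α * s + 2 * β * t) - (β * s + (α + β) * t) > 0 := by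
    nlinarith [mul_pos (show (0:ℝ) < α - β by linarith) st1]
  have hd2 : (α * s + 2 * β * t) + (β * s + (α + β) * t) > 0 := by
    nlinarith [mul_pos (show (0:ℝ) < α - β by linarith) st2, mul_nonneg hβ.le st3']
  have hcv : c = t / s := by rw [hc, es, et]
  have hc1v : c₁ = (β * s + (α + β) * t) / (α * s + 2 * β * t) := by rw [hc₁, e1s, e1t]
  have main : c₁ = (β + (α + β) * c) / (α + 2 * β * c) := by
    rw [hcv, hc1v]
    rw [div_eq_div_iff hs1.ne' (by
      have : α + 2 * β * (t / s) = (α * s + 2 * β * t) / s := by field_simp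
      rw [this]; positivity)]
    field_simp

  refine ⟨main, ?_⟩
  have hcb1 : -1 ≤ c := by rw [hcv, le_div_iff₀ hs]; linarith
  have hcb2 : c ≤ 1 := by rw [hcv, div_le_one hs]; linarith
  have hcb3 : -1 ≤ c₁ := by rw [hc1v, le_div_iff₀ hs1]; linarith
  have hcb4 : c₁ ≤ 1 := by rw [hc1v, div_le_one hs1]; linarith
  rw [Real.cos_arccos hcb3 hcb4, Real.cos_arccos hcb1 hcb2]
  exact main
end

section
/- Let α, β be real numbers with 0 < β < α, and let c be a real number with −1/2 < c < 1. Then c₁ = (β + (α+β)c)/(α + 2βc) also satisfies −1/2 < c₁ < 1; equivalently, if the angle φ between w and Qw with respect to G lies in (0, 2π/3), then the angle φ₁ = arccos c₁ between w and Qw with respect to G₁ = αG + βF also lies in (0, 2π/3). -/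
theorem stmt_9 (α β c : ℝ) (hβ : 0 < β) (hβα : β < α)
    (hc₁ : -1/2 < c) (hc₂ : c < 1) :
    -1/2 < (β + (α + β) * c) / (α + 2 * β * c) ∧
      (β + (α + β) * c) / (α + 2 * β * c) < 1 ∧
      Real.arccos ((β + (α + β) * c) / (α + 2 * β * c)) ∈ Set.Ioo 0 (2 * Real.pi / 3) := by
  have hden : 0 < α + 2 * β * c := by nlinarith
  have h1 : -1/2 < (β + (α + β) * c) / (α + 2 * β * c) := by
    rw [div_lt_div_iff₀ (by norm_num) hden] at *
    nlinarith
  have h2 : (β + (α + β) * c) / (α + 2 * β * c) < 1 := by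
    rw [div_lt_one hden]
    nlinarith
  refine ⟨h1, h2, Real.arccos_pos.mpr h2, ?_⟩
  have key : Real.arccos (-1/2 : ℝ) = 2 * Real.pi / 3 := by
    have : (-1/2 : ℝ) = Real.cos (2 * Real.pi / 3) := by
      rw [show (2 * Real.pi / 3) = Real.pi - Real.pi/3 by ring, Real.cos_pi_sub,
        Real.cos_pi_div_three]; norm_num
    rw [this, Real.arccos_cos (by positivity) (by nlinarith [Real.pi_pos])]
  calc Real.arccos ((β + (α + β) * c) / (α + 2 * β * c)) < Real.arccos (-1/2) := by
        exact Real.strictAntiOn_arccos ⟨by norm_num, by norm_num⟩ ⟨by linarith, le_of_lt h2⟩ h1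
    _ = 2 * Real.pi / 3 := key
end

section
/- Let α, β be real numbers with 0 < β < α, and let (cₙ) be a sequence of real numbers with −1/2 < c₀ < 1 and cₙ₊₁ = (β + (α+β)cₙ)/(α + 2βcₙ) for all n. Then: (i) −1/2 < cₙ < 1 for all n; (ii) the sequence (cₙ) is strictly increasing; (iii) (cₙ) converges and its limit is 1; and therefore (iv) the sequence of angles φₙ = arccos cₙ converges to 0. -/
/-!
Write `f x = (β + (α + β) x) / (α + 2 β x)`. For `x > -1/2` the denominator `D = α + 2 β x` exceeds
`α - β > 0`, and
`1 - f x = (α - β)(1 - x) / D`, `2 f x + 1 = (α + 2 β)(2 x + 1) / D`, `f x - x = β (1 - x)(2 x + 1) / D`.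
The first two keep `(-1/2, 1)` invariant and the third makes `(cₙ)` strictly increasing. Since `cₙ ≥ c₀`,
the denominator is at least `α + 2 β c₀`, so `1 - cₙ` shrinks at least geometrically with ratio
`(α - β) / (α + 2 β c₀) < 1`; continuity of `arccos` then gives `φₙ → arccos 1 = 0`.
-/

open Filter Set Topology

noncomputable def cosStep (α β x : ℝ) : ℝ := (β + (α + β) * x) / (α + 2 * β * x)

section Step

variable {α β x : ℝ}

lemma cosStep_denom_pos (hβ : 0 ≤ β) (hβα : β < α) (hx : -1/2 < x) : 0 < α + 2 * β * x := by
  nlinarith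

lemma one_sub_cosStep (hD : α + 2 * β * x ≠ 0) :
    1 - cosStep α β x = (α - β) * (1 - x) / (α + 2 * β * x) := by
  rw [cosStep, eq_div_iff hD, sub_mul, div_mul_cancel₀ _ hD]
  ring

lemma two_mul_cosStep_add_one (hD : α + 2 * β * x ≠ 0) :
    2 * cosStep α β x + 1 = (α + 2 * β) * (2 * x + 1) / (α + 2 * β * x) := by
  rw [cosStep, eq_div_iff hD, add_mul, mul_assoc, div_mul_cancel₀ _ hD]
  ring

lemma cosStep_sub_self (hD : α + 2 * β * x ≠ 0) :
    cosStep α β x - x = β * (1 - x) * (2 * x + 1) / (α + 2 * β * x) := by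
  rw [cosStep, eq_div_iff hD, sub_mul, div_mul_cancel₀ _ hD]
  ring

lemma cosStep_mem_Ioo (hβ : 0 ≤ β) (hβα : β < α) (hx : x ∈ Ioo (-1/2 : ℝ) 1) :
    cosStep α β x ∈ Ioo (-1/2 : ℝ) 1 := by
  have hD := cosStep_denom_pos hβ hβα hx.1
  have hlow : 0 < 2 * cosStep α β x + 1 := by
    rw [two_mul_cosStep_add_one hD.ne']
    exact div_pos (mul_pos (by linarith) (by linarith [hx.1])) hD
  have hupp : 0 < 1 - cosStep α β x := by
    rw [one_sub_cosStep hD.ne']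
    exact div_pos (mul_pos (by linarith) (by linarith [hx.2])) hD
  constructor <;> linarith

lemma lt_cosStep (hβ : 0 < β) (hβα : β < α) (hx : x ∈ Ioo (-1/2 : ℝ) 1) : x < cosStep α β x := by
  have hD := cosStep_denom_pos hβ.le hβα hx.1
  have : 0 < cosStep α β x - x := by
    rw [cosStep_sub_self hD.ne']
    exact div_pos (mul_pos (mul_pos hβ (by linarith [hx.2])) (by linarith [hx.1])) hD
  linarith

lemma one_sub_cosStep_le {y : ℝ} (hβ : 0 ≤ β) (hβα : β < α) (hy : -1/2 < y) (hyx : y ≤ x)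
    (hx : x ≤ 1) : 1 - cosStep α β x ≤ (α - β) / (α + 2 * β * y) * (1 - x) := by
  have hDy := cosStep_denom_pos hβ hβα hy
  have hDx := cosStep_denom_pos hβ hβα (hy.trans_le hyx)
  rw [one_sub_cosStep hDx.ne', div_mul_eq_mul_div]
  gcongr

end Step

section Orbit

variable {α β : ℝ} {c : ℕ → ℝ}

lemma mem_Ioo_of_cosStep (hβ : 0 ≤ β) (hβα : β < α) (hc0 : c 0 ∈ Ioo (-1/2 : ℝ) 1)
    (hrec : ∀ n, c (n + 1) = cosStep α β (c n)) (n : ℕ) : c n ∈ Ioo (-1/2 : ℝ) 1 := by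
  induction n with
  | zero => exact hc0
  | succ n ih => rw [hrec]; exact cosStep_mem_Ioo hβ hβα ih

lemma strictMono_of_cosStep (hβ : 0 < β) (hβα : β < α) (hc0 : c 0 ∈ Ioo (-1/2 : ℝ) 1)
    (hrec : ∀ n, c (n + 1) = cosStep α β (c n)) : StrictMono c :=
  strictMono_nat_of_lt_succ fun n ↦
    (hrec n).symm ▸ lt_cosStep hβ hβα (mem_Ioo_of_cosStep hβ.le hβα hc0 hrec n)

lemma tendsto_one_of_cosStep (hβ : 0 < β) (hβα : β < α) (hc0 : c 0 ∈ Ioo (-1/2 : ℝ) 1)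
    (hrec : ∀ n, c (n + 1) = cosStep α β (c n)) : Tendsto c atTop (𝓝 1) := by
  set r := (α - β) / (α + 2 * β * c 0)
  have hD0 := cosStep_denom_pos hβ.le hβα hc0.1
  have hr0 : 0 ≤ r := div_nonneg (by linarith) hD0.le
  have hr1 : r < 1 := by rw [div_lt_one hD0]; nlinarith [hc0.1]
  have hbound (n : ℕ) : 1 - c n ≤ r ^ n * (1 - c 0) := by
    refine le_geom (u := fun n ↦ 1 - c n) hr0 n fun k _ ↦ ?_
    rw [hrec]
    exact one_sub_cosStep_le hβ.le hβα hc0.1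
      ((strictMono_of_cosStep hβ hβα hc0 hrec).monotone k.zero_le)
      (mem_Ioo_of_cosStep hβ.le hβα hc0 hrec k).2.le
  have hgeo : Tendsto (fun n ↦ r ^ n * (1 - c 0)) atTop (𝓝 0) := by
    simpa using (tendsto_pow_atTop_nhds_zero_of_lt_one hr0 hr1).mul_const (1 - c 0)
  have hgap : Tendsto (fun n ↦ 1 - c n) atTop (𝓝 0) :=
    squeeze_zero (fun n ↦ by linarith [(mem_Ioo_of_cosStep hβ.le hβα hc0 hrec n).2]) hbound hgeo
  simpa using (tendsto_const_nhds (x := (1 : ℝ))).sub hgap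

end Orbit

theorem stmt_14 (α β : ℝ) (hβ : 0 < β) (hβα : β < α)
    (c : ℕ → ℝ) (hc0 : -1/2 < c 0) (hc0' : c 0 < 1)
    (hrec : ∀ n, c (n + 1) = (β + (α + β) * c n) / (α + 2 * β * c n)) :
    (∀ n, -1/2 < c n ∧ c n < 1) ∧
    StrictMono c ∧
    Filter.Tendsto c Filter.atTop (nhds 1) ∧
    Filter.Tendsto (fun n => Real.arccos (c n)) Filter.atTop (nhds 0) := by
  have hc : c 0 ∈ Ioo (-1/2 : ℝ) 1 := ⟨hc0, hc0'⟩
  have hstep : ∀ n, c (n + 1) = cosStep α β (c n) := hrec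
  have hlim := tendsto_one_of_cosStep hβ hβα hc hstep
  refine ⟨mem_Ioo_of_cosStep hβ.le hβα hc hstep, strictMono_of_cosStep hβ hβα hc hstep, hlim, ?_⟩
  simpa [Real.arccos_one, Function.comp_def] using (Real.continuous_arccos.tendsto 1).comp hlim
end
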